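/- arXiv:1611.04159 — 2 statements merged into one kernel-verified Lean document; each statement's English description precedes it below -/
import Mathlib

section
/- For the five-job, two-machine instance with processing times J1: (3−11ε, ε), J2: (ε, 2−9ε), J3: (ε, 2−8ε), J4: (1−2ε, 1−2ε), J5: (2−8ε, 1−2ε), the schedule assigning J1, J3 to machine M1 and J2, J4, J5 to machine M2 has makespan 4−13ε; hence the ratio of this makespan to the optimal makespan tends to 4 as ε → 0. -/
open Classical Finset

noncomputable section

/-- The five-job two-machine instance: `P5 ε j i` is the processing time of
job `j` (0-indexed: J1 = 0, …, J5 = 4) on machine `i` (M1 = 0, M2 = 1). -/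
def P5 (ε : ℝ) : ℕ → Fin 2 → ℝ := fun j i =>
  if j = 0 then (if i = 0 then 3 - 11*ε else ε)
  else if j = 1 then (if i = 0 then ε else 2 - 9*ε)
  else if j = 2 then (if i = 0 then ε else 2 - 8*ε)
  else if j = 3 then 1 - 2*ε
  else if j = 4 then (if i = 0 then 2 - 8*ε else 1 - 2*ε)
  else 0

/-- Load of machine `i` under schedule `s` for the first `n` jobs. -/
def fLoad (P : ℕ → Fin 2 → ℝ) (n : ℕ) (s : ℕ → Fin 2) (i : Fin 2) : ℝ :=
  ∑ j ∈ Finset.range n, if s j = i then P j i else 0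

/-- Makespan of schedule `s`. -/
def fMk (P : ℕ → Fin 2 → ℝ) (n : ℕ) (s : ℕ → Fin 2) : ℝ :=
  max (fLoad P n s 0) (fLoad P n s 1)

/-- Optimal makespan. -/
def optMk (P : ℕ → Fin 2 → ℝ) (n : ℕ) : ℝ := ⨅ s : ℕ → Fin 2, fMk P n s

/-- J1, J3 on machine M1 and J2, J4, J5 on machine M2. -/
def sched : ℕ → Fin 2 := fun j => if j = 0 ∨ j = 2 then 0 else 1


lemma mk_sched (ε : ℝ) (h1 : 0 < ε) (h2 : ε ≤ 1/13) :
    fMk (P5 ε) 5 sched = 4 - 13*ε := by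
  have : fLoad (P5 ε) 5 sched 0 = 3 - 10*ε := by
    simp [fLoad, sched, P5, Finset.sum_range_succ]; ring
  have h' : fLoad (P5 ε) 5 sched 1 = 4 - 13*ε := by
    simp [fLoad, sched, P5, Finset.sum_range_succ]; ring
  rw [fMk, this, h', max_eq_right (by linarith)]

/-- the optimal schedule -/
def sOpt : ℕ → Fin 2 := fun j => if j = 1 ∨ j = 2 ∨ j = 3 then 0 else 1

lemma opt_eq_one (ε : ℝ) (h1 : 0 < ε) (h2 : ε ≤ 1/13) : optMk (P5 ε) 5 = 1 := by
  have hlb : ∀ s : ℕ → Fin 2, 1 ≤ fMk (P5 ε) 5 s := by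
    intro s
    have c0 : s 0 = 0 ∨ s 0 = 1 := by omega
    have c1 : s 1 = 0 ∨ s 1 = 1 := by omega
    have c2 : s 2 = 0 ∨ s 2 = 1 := by omega
    have c3 : s 3 = 0 ∨ s 3 = 1 := by omega
    have c4 : s 4 = 0 ∨ s 4 = 1 := by omega
    rcases c0 with h0 | h0 <;> rcases c1 with ha | ha <;> rcases c2 with hb | hb <;>
      rcases c3 with hc | hc <;> rcases c4 with hd | hd <;>
      simp [fMk, fLoad, P5, Finset.sum_range_succ, h0, ha, hb, hc, hd, le_max_iff] <;>
      first | (left; linarith) | (right; linarith) | linarith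
  have hub : fMk (P5 ε) 5 sOpt = 1 := by
    have e0 : fLoad (P5 ε) 5 sOpt 0 = 1 := by
      simp [fLoad, sOpt, P5, Finset.sum_range_succ]; ring
    have e1 : fLoad (P5 ε) 5 sOpt 1 = 1 - ε := by
      simp [fLoad, sOpt, P5, Finset.sum_range_succ]; ring
    rw [fMk, e0, e1, max_eq_left (by linarith)]
  refine le_antisymm ?_ (le_ciInf hlb)
  calc optMk (P5 ε) 5 ≤ fMk (P5 ε) 5 sOpt := ciInf_le ⟨1, by rintro _ ⟨s, rfl⟩; exact hlb s⟩ _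
    _ = 1 := hub

/-- The schedule assigning J1, J3 to M1 and J2, J4, J5 to M2 has makespan
`4 − 13ε`; the ratio of this makespan to the optimal makespan tends to 4
as `ε → 0⁺`. -/
theorem five_job_instance_spe_makespan :
    (∀ ε : ℝ, 0 < ε → ε ≤ 1/13 → fMk (P5 ε) 5 sched = 4 - 13*ε) ∧
    Filter.Tendsto (fun ε : ℝ => fMk (P5 ε) 5 sched / optMk (P5 ε) 5)
      (nhdsWithin 0 (Set.Ioi 0)) (nhds 4) := by
  constructor
  · exact mk_sched
  · have heq : ∀ᶠ ε in nhdsWithin (0:ℝ) (Set.Ioi 0),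
        fMk (P5 ε) 5 sched / optMk (P5 ε) 5 = 4 - 13*ε := by
      have hmem : Set.Ioc (0:ℝ) (1/13) ∈ nhdsWithin (0:ℝ) (Set.Ioi 0) :=
        Ioc_mem_nhdsGT_of_mem ⟨le_refl _, by norm_num⟩
      filter_upwards [hmem] with ε hε
      rw [mk_sched ε hε.1 hε.2, opt_eq_one ε hε.1 hε.2, div_one]
    have hlim : Filter.Tendsto (fun ε : ℝ => 4 - 13*ε)
        (nhdsWithin (0:ℝ) (Set.Ioi 0)) (nhds 4) := by
      have : Filter.Tendsto (fun ε : ℝ => 4 - 13*ε) (nhds 0) (nhds (4 - 13*0)) :=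
        Continuous.tendsto (by continuity) 0
      simpa using this.mono_left nhdsWithin_le_nhds
    exact hlim.congr' (Filter.EventuallyEq.symm heq)

end
end

section
/- In the sequential game on the five-job instance J1: (3−11ε, ε), J2: (ε, 2−9ε), J3: (ε, 2−8ε), J4: (1−2ε, 1−2ε), J5: (2−8ε, 1−2ε), where jobs choose machines in order J1,...,J5 by backwards induction and break ties in favor of machine M1, the subgame perfect equilibrium outcome assigns J1, J3 to M1 and J2, J4, J5 to M2, yielding makespan 4−13ε. -/
open Classical Finset

noncomputable section

/-- Load of machine `i` given the list `s` of machine choices of jobs `0, 1, …`. -/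
def mLoad (P : ℕ → Fin 2 → ℝ) (s : List (Fin 2)) (i : Fin 2) : ℝ :=
  ∑ j ∈ Finset.range s.length, if s.getD j 0 = i then P j i else 0

/-- Makespan of a full list of choices. -/
def lMk (P : ℕ → Fin 2 → ℝ) (s : List (Fin 2)) : ℝ :=
  max (mLoad P s 0) (mLoad P s 1)

/-- Backwards-induction (subgame perfect) play of the sequential game with `n`
players moving in order `0, 1, …, n − 1`, starting from the history `pref` of
choices already made.  Each player chooses the machine minimizing the final
load of her own machine, breaking ties in favor of machine `M1` (= `0`). -/
def spe (P : ℕ → Fin 2 → ℝ) (n : ℕ) (pref : List (Fin 2)) : List (Fin 2) :=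
  if h : n ≤ pref.length then pref
  else
    let s0 := spe P n (pref ++ [0])
    let s1 := spe P n (pref ++ [1])
    if mLoad P s0 0 ≤ mLoad P s1 1 then s0 else s1
termination_by n - pref.length
decreasing_by all_goals simp [List.length_append]; omega

/-!
Subgame perfect outcomes are computed bottom-up over the game tree, with one pruning rule:
loads only grow along a play, so a player whose final load on `M1` is at most the current load
of `M2` plus her own processing time there picks `M1` whatever the subgame after `M2` yields
(symmetrically, with strict inequality because of the tie-break, for `M2`). This cuts the 31
subgames down to 18. At the root `J1` ends with load `3 − 10ε` on either machine, and the
tie-break sends her to `M1`.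
-/

section SequentialGame

variable {P : ℕ → Fin 2 → ℝ} {n : ℕ} {p s s₀ s₁ : List (Fin 2)}

theorem spe_of_length_ge (h : n ≤ p.length) : spe P n p = p := by
  rw [spe, dif_pos h]

theorem spe_of_length_lt (h : p.length < n) :
    spe P n p = if mLoad P (spe P n (p ++ [0])) 0 ≤ mLoad P (spe P n (p ++ [1])) 1
      then spe P n (p ++ [0]) else spe P n (p ++ [1]) := by
  rw [spe, dif_neg h.not_ge]

theorem prefix_spe (P : ℕ → Fin 2 → ℝ) (n : ℕ) (p : List (Fin 2)) : p <+: spe P n p := by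
  induction p using spe.induct P n with
  | case1 p h => rw [spe_of_length_ge h]
  | case2 p h _ _ hle ih₀ _ =>
    rw [spe_of_length_lt (not_le.mp h), if_pos hle]
    exact (List.prefix_append p [0]).trans ih₀
  | case3 p h _ _ hlt _ ih₁ =>
    rw [spe_of_length_lt (not_le.mp h), if_neg hlt]
    exact (List.prefix_append p [1]).trans ih₁

theorem mLoad_le_of_prefix (hP : ∀ j i, 0 ≤ P j i) (h : p <+: s) (i : Fin 2) :
    mLoad P p i ≤ mLoad P s i := by
  obtain ⟨t, rfl⟩ := h
  calc mLoad P p i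
      = ∑ j ∈ Finset.range p.length, if (p ++ t).getD j 0 = i then P j i else 0 :=
        Finset.sum_congr rfl fun j hj => by
          rw [List.getD_append _ _ _ _ (Finset.mem_range.mp hj)]
    _ ≤ mLoad P (p ++ t) i :=
        Finset.sum_le_sum_of_subset_of_nonneg (by simp)
          fun j _ _ => by split_ifs <;> simp [hP]

theorem mLoad_le_mLoad_spe (hP : ∀ j i, 0 ≤ P j i) (i : Fin 2) :
    mLoad P p i ≤ mLoad P (spe P n p) i :=
  mLoad_le_of_prefix hP (prefix_spe P n p) i

theorem spe_eq_of_le (hp : p.length < n) (h₀ : spe P n (p ++ [0]) = s₀)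
    (h₁ : spe P n (p ++ [1]) = s₁) (h : mLoad P s₀ 0 ≤ mLoad P s₁ 1) : spe P n p = s₀ := by
  rw [spe_of_length_lt hp, h₀, h₁, if_pos h]

theorem spe_eq_of_lt (hp : p.length < n) (h₀ : spe P n (p ++ [0]) = s₀)
    (h₁ : spe P n (p ++ [1]) = s₁) (h : mLoad P s₁ 1 < mLoad P s₀ 0) : spe P n p = s₁ := by
  rw [spe_of_length_lt hp, h₀, h₁, if_neg h.not_ge]

theorem spe_eq_of_le_load (hP : ∀ j i, 0 ≤ P j i) (hp : p.length < n)
    (h₀ : spe P n (p ++ [0]) = s₀) (h : mLoad P s₀ 0 ≤ mLoad P (p ++ [1]) 1) : spe P n p = s₀ :=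
  spe_eq_of_le hp h₀ rfl (h.trans (mLoad_le_mLoad_spe hP 1))

theorem spe_eq_of_lt_load (hP : ∀ j i, 0 ≤ P j i) (hp : p.length < n)
    (h₁ : spe P n (p ++ [1]) = s₁) (h : mLoad P s₁ 1 < mLoad P (p ++ [0]) 0) : spe P n p = s₁ :=
  spe_eq_of_lt hp rfl h₁ (h.trans_le (mLoad_le_mLoad_spe hP 0))

theorem spe_eq_append_zero (hp : p.length + 1 = n)
    (h : mLoad P (p ++ [0]) 0 ≤ mLoad P (p ++ [1]) 1) : spe P n p = p ++ [0] :=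
  spe_eq_of_le (by omega) (spe_of_length_ge (by simp [hp])) (spe_of_length_ge (by simp [hp])) h

theorem spe_eq_append_one (hp : p.length + 1 = n)
    (h : mLoad P (p ++ [1]) 1 < mLoad P (p ++ [0]) 0) : spe P n p = p ++ [1] :=
  spe_eq_of_lt (by omega) (spe_of_length_ge (by simp [hp])) (spe_of_length_ge (by simp [hp])) h

end SequentialGame

namespace P5

variable {ε : ℝ}

theorem nonneg (h₀ : 0 ≤ ε) (h₁ : ε ≤ 2 / 9) (j : ℕ) (i : Fin 2) : 0 ≤ P5 ε j i := by
  unfold P5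
  split_ifs <;> linarith

theorem spe_001 (hε : 0 < ε) (hε' : ε ≤ 1 / 100) : spe (P5 ε) 5 [0, 0, 1] = [0, 0, 1, 0, 1] :=
  spe_eq_of_le (by simp)
    (spe_eq_append_one rfl (by norm_num [mLoad, P5, Finset.sum_range_succ]; linarith))
    (spe_eq_append_one rfl (by norm_num [mLoad, P5, Finset.sum_range_succ]; linarith))
    (by norm_num [mLoad, P5, Finset.sum_range_succ]; linarith)

theorem spe_00 (hε : 0 < ε) (hε' : ε ≤ 1 / 100) : spe (P5 ε) 5 [0, 0] = [0, 0, 1, 0, 1] :=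
  spe_eq_of_lt_load (nonneg hε.le (by linarith)) (by simp) (spe_001 hε hε')
    (by norm_num [mLoad, P5, Finset.sum_range_succ]; linarith)

theorem spe_010 (hε : 0 < ε) (hε' : ε ≤ 1 / 100) : spe (P5 ε) 5 [0, 1, 0] = [0, 1, 0, 1, 1] :=
  spe_eq_of_lt_load (nonneg hε.le (by linarith)) (by simp)
    (spe_eq_append_one rfl (by norm_num [mLoad, P5, Finset.sum_range_succ]; linarith))
    (by norm_num [mLoad, P5, Finset.sum_range_succ]; linarith)

theorem spe_01 (hε : 0 < ε) (hε' : ε ≤ 1 / 100) : spe (P5 ε) 5 [0, 1] = [0, 1, 0, 1, 1] :=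
  spe_eq_of_le_load (nonneg hε.le (by linarith)) (by simp) (spe_010 hε hε')
    (by norm_num [mLoad, P5, Finset.sum_range_succ]; linarith)

theorem spe_0 (hε : 0 < ε) (hε' : ε ≤ 1 / 100) : spe (P5 ε) 5 [0] = [0, 1, 0, 1, 1] :=
  spe_eq_of_lt (by simp) (spe_00 hε hε') (spe_01 hε hε')
    (by norm_num [mLoad, P5, Finset.sum_range_succ]; linarith)

theorem spe_100 (hε : 0 < ε) (hε' : ε ≤ 1 / 100) : spe (P5 ε) 5 [1, 0, 0] = [1, 0, 0, 1, 0] :=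
  spe_eq_of_lt_load (nonneg hε.le (by linarith)) (by simp)
    (spe_eq_append_zero rfl (by norm_num [mLoad, P5, Finset.sum_range_succ]; linarith))
    (by norm_num [mLoad, P5, Finset.sum_range_succ]; linarith)

theorem spe_101 (hε : 0 < ε) (hε' : ε ≤ 1 / 100) : spe (P5 ε) 5 [1, 0, 1] = [1, 0, 1, 0, 0] :=
  spe_eq_of_le_load (nonneg hε.le (by linarith)) (by simp)
    (spe_eq_append_zero rfl (by norm_num [mLoad, P5, Finset.sum_range_succ]; linarith))
    (by norm_num [mLoad, P5, Finset.sum_range_succ]; linarith)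

theorem spe_10 (hε : 0 < ε) (hε' : ε ≤ 1 / 100) : spe (P5 ε) 5 [1, 0] = [1, 0, 1, 0, 0] :=
  spe_eq_of_lt (by simp) (spe_100 hε hε') (spe_101 hε hε')
    (by norm_num [mLoad, P5, Finset.sum_range_succ]; linarith)

theorem spe_110 (hε : 0 < ε) (hε' : ε ≤ 1 / 100) : spe (P5 ε) 5 [1, 1, 0] = [1, 1, 0, 0, 1] :=
  spe_eq_of_le_load (nonneg hε.le (by linarith)) (by simp)
    (spe_eq_append_one rfl (by norm_num [mLoad, P5, Finset.sum_range_succ]; linarith))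
    (by norm_num [mLoad, P5, Finset.sum_range_succ]; linarith)

theorem spe_11 (hε : 0 < ε) (hε' : ε ≤ 1 / 100) : spe (P5 ε) 5 [1, 1] = [1, 1, 0, 0, 1] :=
  spe_eq_of_le_load (nonneg hε.le (by linarith)) (by simp) (spe_110 hε hε')
    (by norm_num [mLoad, P5, Finset.sum_range_succ]; linarith)

theorem spe_1 (hε : 0 < ε) (hε' : ε ≤ 1 / 100) : spe (P5 ε) 5 [1] = [1, 1, 0, 0, 1] :=
  spe_eq_of_lt (by simp) (spe_10 hε hε') (spe_11 hε hε')
    (by norm_num [mLoad, P5, Finset.sum_range_succ]; linarith)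

end P5

/-- For `0 < ε ≤ 1/100`, the subgame perfect equilibrium outcome of the
five-job sequential game (ties broken in favor of M1) assigns J1, J3 to M1 and
J2, J4, J5 to M2, yielding makespan `4 − 13ε`. -/
theorem five_job_spe_outcome :
    ∀ ε : ℝ, 0 < ε → ε ≤ 1/100 →
      spe (P5 ε) 5 [] = [0, 1, 0, 1, 1] ∧
      lMk (P5 ε) (spe (P5 ε) 5 []) = 4 - 13*ε := by
  intro ε hε hε'
  have hspe : spe (P5 ε) 5 [] = [0, 1, 0, 1, 1] :=
    spe_eq_of_le (by simp) (P5.spe_0 hε hε') (P5.spe_1 hε hε')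
      (by norm_num [mLoad, P5, Finset.sum_range_succ]; linarith)
  refine ⟨hspe, ?_⟩
  rw [hspe, lMk, max_eq_right (by norm_num [mLoad, P5, Finset.sum_range_succ]; linarith)]
  norm_num [mLoad, P5, Finset.sum_range_succ]
  ring
end
end
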